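/- arXiv:1511.02723 — 6 statements merged into one kernel-verified Lean document; each statement's English description precedes it below -/
import Mathlib

section
/- Let {X_k}_{k≥1} be centred random variables with E[X_k²] ≤ 1, and let {φ_k}_{k≥1} be a non-increasing sequence of non-negative reals such that for all i < j < k < l: |Cov(X_i, X_j X_k X_l)| ≤ φ_{j−i}, |Cov(X_i X_j X_k, X_l)| ≤ φ_{l−k}, |Cov(X_i X_j, X_k X_l)| ≤ φ_{k−j}, and |Cov(X_i, X_j)| ≤ φ_{j−i}. Then for all i < j < k < l, |Cov(X_i X_j, X_k X_l)| ≤ 2·min{φ_{j−i}, φ_{k−j}, φ_{l−k}}. -/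
/-!
Since `X_i` and `X_l` are centred, `Cov(X_i X_j, X_k X_l)` equals both
`Cov(X_i, X_j X_k X_l) - Cov(X_i, X_j) E[X_k X_l]` and
`Cov(X_i X_j X_k, X_l) - E[X_i X_j] Cov(X_k, X_l)`.
Second moments of products are at most `1` in absolute value (AM-GM and `E[X_m²] ≤ 1`),
so the two identities give the bounds `2 φ_{j-i}` and `2 φ_{l-k}`; the bound `φ_{k-j}` is
assumed.
-/

open MeasureTheory

/-- Covariance of two real random variables: `Cov(f,g) = E[fg] - E[f]E[g]`. -/
noncomputable def cov {Ω : Type*} [MeasurableSpace Ω] (μ : Measure Ω) (f g : Ω → ℝ) : ℝ :=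
  (∫ ω, f ω * g ω ∂μ) - (∫ ω, f ω ∂μ) * (∫ ω, g ω ∂μ)

section

variable {Ω : Type*} [MeasurableSpace Ω] {μ : Measure Ω} {f g h k : Ω → ℝ}

lemma abs_integral_mul_le_half_add (hf : MemLp f 2 μ) (hg : MemLp g 2 μ) :
    |∫ ω, f ω * g ω ∂μ| ≤ ((∫ ω, f ω ^ 2 ∂μ) + ∫ ω, g ω ^ 2 ∂μ) / 2 := by
  have hamgm : ∀ ω, |f ω * g ω| ≤ (f ω ^ 2 + g ω ^ 2) / 2 := fun ω => by
    rw [abs_mul, ← sq_abs (f ω), ← sq_abs (g ω)]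
    linarith [two_mul_le_add_sq |f ω| |g ω|]
  calc |∫ ω, f ω * g ω ∂μ| ≤ ∫ ω, |f ω * g ω| ∂μ := abs_integral_le_integral_abs
    _ ≤ ∫ ω, (f ω ^ 2 + g ω ^ 2) / 2 ∂μ :=
      integral_mono_of_nonneg (.of_forall fun _ => abs_nonneg _)
        ((hf.integrable_sq.add hg.integrable_sq).div_const 2) (.of_forall hamgm)
    _ = _ := by rw [integral_div, integral_add hf.integrable_sq hg.integrable_sq]

lemma cov_mul_mul_of_integral_left_eq_zero (hf : ∫ ω, f ω ∂μ = 0) :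
    cov μ (fun ω => f ω * g ω) (fun ω => h ω * k ω) =
      cov μ f (fun ω => g ω * h ω * k ω) - cov μ f g * ∫ ω, h ω * k ω ∂μ := by
  simp only [cov, hf, zero_mul, sub_zero, mul_assoc]

lemma cov_mul_mul_of_integral_right_eq_zero (hk : ∫ ω, k ω ∂μ = 0) :
    cov μ (fun ω => f ω * g ω) (fun ω => h ω * k ω) =
      cov μ (fun ω => f ω * g ω * h ω) k - (∫ ω, f ω * g ω ∂μ) * cov μ h k := by
  simp only [cov, hk, mul_zero, sub_zero, mul_assoc]

lemma abs_cov_mul_mul_le_of_integral_left_eq_zero (hf : ∫ ω, f ω ∂μ = 0)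
    (hhk : |∫ ω, h ω * k ω ∂μ| ≤ 1) :
    |cov μ (fun ω => f ω * g ω) (fun ω => h ω * k ω)| ≤
      |cov μ f (fun ω => g ω * h ω * k ω)| + |cov μ f g| := by
  rw [cov_mul_mul_of_integral_left_eq_zero hf]
  refine (abs_sub _ _).trans (add_le_add_right ?_ _)
  rw [abs_mul]
  exact mul_le_of_le_one_right (abs_nonneg _) hhk

lemma abs_cov_mul_mul_le_of_integral_right_eq_zero (hk : ∫ ω, k ω ∂μ = 0)
    (hfg : |∫ ω, f ω * g ω ∂μ| ≤ 1) :
    |cov μ (fun ω => f ω * g ω) (fun ω => h ω * k ω)| ≤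
      |cov μ (fun ω => f ω * g ω * h ω) k| + |cov μ h k| := by
  rw [cov_mul_mul_of_integral_right_eq_zero hk]
  refine (abs_sub _ _).trans (add_le_add_right ?_ _)
  rw [abs_mul]
  exact mul_le_of_le_one_left (abs_nonneg _) hfg

end

theorem abs_cov_pair_products_le_general {Ω : Type*} [MeasurableSpace Ω]
    (μ : Measure Ω) [IsProbabilityMeasure μ] (X : ℕ → Ω → ℝ) (φ : ℕ → ℝ)
    (hL4 : ∀ k, MemLp (X k) 4 μ)
    (hcent : ∀ k, ∫ ω, X k ω ∂μ = 0)
    (hvar : ∀ k, ∫ ω, (X k ω) ^ 2 ∂μ ≤ 1)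
    (hcov : ∀ i j k l : ℕ, i < j → j < k → k < l →
      |cov μ (X i) (fun ω => X j ω * X k ω * X l ω)| ≤ φ (j - i) ∧
      |cov μ (fun ω => X i ω * X j ω * X k ω) (X l)| ≤ φ (l - k) ∧
      |cov μ (fun ω => X i ω * X j ω) (fun ω => X k ω * X l ω)| ≤ φ (k - j) ∧
      |cov μ (X i) (X j)| ≤ φ (j - i)) :
    ∀ i j k l : ℕ, i < j → j < k → k < l →
      |cov μ (fun ω => X i ω * X j ω) (fun ω => X k ω * X l ω)| ≤
        2 * min (φ (j - i)) (min (φ (k - j)) (φ (l - k))) := by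
  intro i j k l hij hjk hkl
  obtain ⟨hleft, hright, hmid, -⟩ := hcov i j k l hij hjk hkl
  have hcov_ij := (hcov i j (j + 1) (j + 2) hij (by omega) (by omega)).2.2.2
  have hcov_kl := (hcov k l (l + 1) (l + 2) hkl (by omega) (by omega)).2.2.2
  have hmoment : ∀ m n, |∫ ω, X m ω * X n ω ∂μ| ≤ 1 := fun m n => by
    have hL2 : ∀ m, MemLp (X m) 2 μ := fun m => (hL4 m).mono_exponent (by norm_num)
    linarith [abs_integral_mul_le_half_add (hL2 m) (hL2 n), hvar m, hvar n]
  have hsplit_left :=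
    abs_cov_mul_mul_le_of_integral_left_eq_zero (g := X j) (hcent i) (hmoment k l)
  have hsplit_right :=
    abs_cov_mul_mul_le_of_integral_right_eq_zero (h := X k) (hcent l) (hmoment i j)
  rw [mul_min_of_nonneg _ _ zero_le_two, mul_min_of_nonneg _ _ zero_le_two]
  have hmid_two : _ ≤ 2 * φ (k - j) :=
    hmid.trans (le_mul_of_one_le_left ((abs_nonneg _).trans hmid) one_le_two)
  exact le_min (by linarith) (le_min hmid_two (by linarith))

/-- Under the covariance conditions of the paper, for all `i < j < k < l`,
`|Cov(X_i X_j, X_k X_l)| ≤ 2 min{φ_{j−i}, φ_{k−j}, φ_{l−k}}`. -/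
theorem abs_cov_pair_products_le {Ω : Type*} [MeasurableSpace Ω]
    (μ : Measure Ω) [IsProbabilityMeasure μ] (X : ℕ → Ω → ℝ) (φ : ℕ → ℝ)
    (hL4 : ∀ k, MemLp (X k) 4 μ)
    (hcent : ∀ k, ∫ ω, X k ω ∂μ = 0)
    (hvar : ∀ k, ∫ ω, (X k ω) ^ 2 ∂μ ≤ 1)
    (hφ : ∀ k, 0 ≤ φ k)
    (hmono : ∀ k l : ℕ, 1 ≤ k → k ≤ l → φ l ≤ φ k)
    (hcov : ∀ i j k l : ℕ, i < j → j < k → k < l →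
      |cov μ (X i) (fun ω => X j ω * X k ω * X l ω)| ≤ φ (j - i) ∧
      |cov μ (fun ω => X i ω * X j ω * X k ω) (X l)| ≤ φ (l - k) ∧
      |cov μ (fun ω => X i ω * X j ω) (fun ω => X k ω * X l ω)| ≤ φ (k - j) ∧
      |cov μ (X i) (X j)| ≤ φ (j - i)) :
    ∀ i j k l : ℕ, i < j → j < k → k < l →
      |cov μ (fun ω => X i ω * X j ω) (fun ω => X k ω * X l ω)| ≤
        2 * min (φ (j - i)) (min (φ (k - j)) (φ (l - k))) :=
  abs_cov_pair_products_le_general μ X φ hL4 hcent hvar hcov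
end

section
/- Let {X_k}_{k≥1} be centred random variables with E[X_k²] ≤ 1, and let {φ_k}_{k≥1} be a non-increasing sequence of non-negative reals such that for all i < j < k < l: |Cov(X_i, X_j X_k X_l)| ≤ φ_{j−i}, |Cov(X_i X_j X_k, X_l)| ≤ φ_{l−k}, |Cov(X_i X_j, X_k X_l)| ≤ φ_{k−j}, and |Cov(X_i, X_j)| ≤ φ_{j−i}. Then for all i < j < k < l, both |Cov(X_i X_k, X_j X_l)| ≤ 2·min{φ_{j−i}, φ_{l−k}} and |Cov(X_i X_l, X_j X_k)| ≤ 2·min{φ_{j−i}, φ_{l−k}}. -/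
open MeasureTheory
open scoped BigOperators

/-!
For centred variables `Cov(X_i, X_j X_k X_l)` and `Cov(X_i X_j X_k, X_l)` both equal
the fourth moment `A = E[X_i X_j X_k X_l]`, so `|A| ≤ min{φ_{j−i}, φ_{l−k}}`. Each crossed
covariance is `A − E[X_a X_b] E[X_c X_d]`. Each pair moment is at most `1` (Cauchy–Schwarz) and
at most `φ_{b−a}`; bounding the factor containing `X_i` (resp. `X_l`) by `φ` and the other by `1`
gives at most `φ_{j−i}` (resp. `φ_{l−k}`), since that factor has gap at least `j − i` (resp. `l − k`)
and `φ` is non-increasing.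
-/

section Covariance

variable {Ω : Type*} [MeasurableSpace Ω] {μ : Measure Ω} {f g : Ω → ℝ}

lemma cov_eq_integral_mul_of_integral_left_eq_zero (hf : ∫ ω, f ω ∂μ = 0) :
    cov μ f g = ∫ ω, f ω * g ω ∂μ := by
  simp [cov, hf]

lemma cov_eq_integral_mul_of_integral_right_eq_zero (hg : ∫ ω, g ω ∂μ = 0) :
    cov μ f g = ∫ ω, f ω * g ω ∂μ := by
  simp [cov, hg]

lemma abs_cov_le_two_mul {m : ℝ} (hfg : |∫ ω, f ω * g ω ∂μ| ≤ m)
    (hprod : |∫ ω, f ω ∂μ| * |∫ ω, g ω ∂μ| ≤ m) : |cov μ f g| ≤ 2 * m := by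
  unfold cov
  calc _ ≤ |∫ ω, f ω * g ω ∂μ| + |(∫ ω, f ω ∂μ) * ∫ ω, g ω ∂μ| := abs_sub _ _
    _ ≤ 2 * m := by rw [abs_mul]; linarith

-- Under unit second moments, the pointwise bound `|fg| ≤ (f² + g²) / 2` replaces Cauchy–Schwarz.
lemma abs_integral_mul_le_one (hf : MemLp f 2 μ) (hg : MemLp g 2 μ)
    (hf1 : ∫ ω, f ω ^ 2 ∂μ ≤ 1) (hg1 : ∫ ω, g ω ^ 2 ∂μ ≤ 1) :
    |∫ ω, f ω * g ω ∂μ| ≤ 1 := by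
  have hf2 := hf.integrable_sq
  have hg2 := hg.integrable_sq
  calc |∫ ω, f ω * g ω ∂μ| ≤ ∫ ω, |f ω * g ω| ∂μ := abs_integral_le_integral_abs
    _ ≤ ∫ ω, (f ω ^ 2 + g ω ^ 2) / 2 ∂μ := by
      refine integral_mono (hf.integrable_mul hg).abs ((hf2.add hg2).div_const 2) fun ω => ?_
      have := two_mul_le_add_sq |f ω| |g ω|
      rw [sq_abs, sq_abs] at this
      rw [abs_mul]
      linarith
    _ = ((∫ ω, f ω ^ 2 ∂μ) + ∫ ω, g ω ^ 2 ∂μ) / 2 := by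
      rw [integral_div, integral_add hf2 hg2]
    _ ≤ 1 := by linarith

end Covariance

theorem abs_cov_crossed_products_le_general {Ω : Type*} [MeasurableSpace Ω]
    (μ : Measure Ω) [IsProbabilityMeasure μ] (X : ℕ → Ω → ℝ) (φ : ℕ → ℝ)
    (hL4 : ∀ k, MemLp (X k) 4 μ)
    (hcent : ∀ k, ∫ ω, X k ω ∂μ = 0)
    (hvar : ∀ k, ∫ ω, (X k ω) ^ 2 ∂μ ≤ 1)
    (hmono : ∀ k l : ℕ, 1 ≤ k → k ≤ l → φ l ≤ φ k)
    (hcov : ∀ i j k l : ℕ, i < j → j < k → k < l →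
      |cov μ (X i) (fun ω => X j ω * X k ω * X l ω)| ≤ φ (j - i) ∧
      |cov μ (fun ω => X i ω * X j ω * X k ω) (X l)| ≤ φ (l - k) ∧
      |cov μ (fun ω => X i ω * X j ω) (fun ω => X k ω * X l ω)| ≤ φ (k - j) ∧
      |cov μ (X i) (X j)| ≤ φ (j - i)) :
    ∀ i j k l : ℕ, i < j → j < k → k < l →
      |cov μ (fun ω => X i ω * X k ω) (fun ω => X j ω * X l ω)| ≤
          2 * min (φ (j - i)) (φ (l - k)) ∧
      |cov μ (fun ω => X i ω * X l ω) (fun ω => X j ω * X k ω)| ≤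
          2 * min (φ (j - i)) (φ (l - k)) := by
  intro i j k l hij hjk hkl
  have hpair_one (a b : ℕ) : |∫ ω, X a ω * X b ω ∂μ| ≤ 1 :=
    abs_integral_mul_le_one ((hL4 a).mono_exponent (by norm_num))
      ((hL4 b).mono_exponent (by norm_num)) (hvar a) (hvar b)
  have hpair (a b : ℕ) (hab : a < b) : |∫ ω, X a ω * X b ω ∂μ| ≤ φ (b - a) := by
    simpa [cov_eq_integral_mul_of_integral_left_eq_zero (hcent a)] using
      (hcov a b (b + 1) (b + 2) hab (by omega) (by omega)).2.2.2
  obtain ⟨hleft, hright, -, -⟩ := hcov i j k l hij hjk hkl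
  rw [cov_eq_integral_mul_of_integral_left_eq_zero (hcent i)] at hleft
  rw [cov_eq_integral_mul_of_integral_right_eq_zero (hcent l)] at hright
  have hfour (F : Ω → ℝ) (hF : ∀ ω, F ω = X i ω * X j ω * X k ω * X l ω) :
      |∫ ω, F ω ∂μ| ≤ min (φ (j - i)) (φ (l - k)) := by
    simp only [hF]
    exact le_min (by simpa only [mul_assoc] using hleft) hright
  refine ⟨abs_cov_le_two_mul (hfour _ fun ω => by ring) (le_min ?_ ?_),
    abs_cov_le_two_mul (hfour _ fun ω => by ring) (le_min ?_ ?_)⟩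
  · calc _ ≤ |∫ ω, X i ω * X k ω ∂μ| := mul_le_of_le_one_right (abs_nonneg _) (hpair_one j l)
      _ ≤ φ (j - i) := (hpair i k (by omega)).trans (hmono _ _ (by omega) (by omega))
  · calc _ ≤ |∫ ω, X j ω * X l ω ∂μ| := mul_le_of_le_one_left (abs_nonneg _) (hpair_one i k)
      _ ≤ φ (l - k) := (hpair j l (by omega)).trans (hmono _ _ (by omega) (by omega))
  all_goals
    calc _ ≤ |∫ ω, X i ω * X l ω ∂μ| := mul_le_of_le_one_right (abs_nonneg _) (hpair_one j k)
      _ ≤ _ := (hpair i l (by omega)).trans (hmono _ _ (by omega) (by omega))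

/-- Under the covariance conditions of the paper, for all `i < j < k < l`, both
`|Cov(X_i X_k, X_j X_l)| ≤ 2 min{φ_{j−i}, φ_{l−k}}` and
`|Cov(X_i X_l, X_j X_k)| ≤ 2 min{φ_{j−i}, φ_{l−k}}`. -/
theorem abs_cov_crossed_products_le {Ω : Type*} [MeasurableSpace Ω]
    (μ : Measure Ω) [IsProbabilityMeasure μ] (X : ℕ → Ω → ℝ) (φ : ℕ → ℝ)
    (hL4 : ∀ k, MemLp (X k) 4 μ)
    (hcent : ∀ k, ∫ ω, X k ω ∂μ = 0)
    (hvar : ∀ k, ∫ ω, (X k ω) ^ 2 ∂μ ≤ 1)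
    (hφ : ∀ k, 0 ≤ φ k)
    (hmono : ∀ k l : ℕ, 1 ≤ k → k ≤ l → φ l ≤ φ k)
    (hcov : ∀ i j k l : ℕ, i < j → j < k → k < l →
      |cov μ (X i) (fun ω => X j ω * X k ω * X l ω)| ≤ φ (j - i) ∧
      |cov μ (fun ω => X i ω * X j ω * X k ω) (X l)| ≤ φ (l - k) ∧
      |cov μ (fun ω => X i ω * X j ω) (fun ω => X k ω * X l ω)| ≤ φ (k - j) ∧
      |cov μ (X i) (X j)| ≤ φ (j - i)) :
    ∀ i j k l : ℕ, i < j → j < k → k < l →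
      |cov μ (fun ω => X i ω * X k ω) (fun ω => X j ω * X l ω)| ≤
          2 * min (φ (j - i)) (φ (l - k)) ∧
      |cov μ (fun ω => X i ω * X l ω) (fun ω => X j ω * X k ω)| ≤
          2 * min (φ (j - i)) (φ (l - k)) :=
  abs_cov_crossed_products_le_general μ X φ hL4 hcent hvar hmono hcov
end

section
/- Let {X_k}_{k≥1} be random variables with E[X_k²] ≤ 1 and Φ₀ = sup_k E[X_k⁴] < ∞, and let {ψ_k}_{k≥1} be non-negative reals with Φ₂ = Σ_{k=1}^∞ ψ_k < ∞ such that Cov(X_i², X_j²) ≤ ψ_{j−i} for all i < j. Then for every p ≥ 1 and all non-negative reals d_1, …, d_p, Var(Σ_{i=1}^p d_i X_i²) ≤ 2(Φ₀ + Φ₂)·Σ_{i=1}^p d_i². -/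
/-!
Expanding the variance bilinearly gives `Var(∑ dᵢ Xᵢ²) = ∑ᵢⱼ dᵢ dⱼ Cov(Xᵢ², Xⱼ²)`. Each covariance is
at most the Toeplitz weight `wᵢⱼ`, equal to `Φ₀` on the diagonal (`Cov(Xᵢ², Xᵢ²) ≤ E[Xᵢ⁴]`) and to
`ψ_{|i-j|}` off it; as `d ≥ 0` the quadratic form is at most `∑ᵢⱼ dᵢ dⱼ wᵢⱼ`. By
`2 dᵢ dⱼ ≤ dᵢ² + dⱼ²` and the symmetry of `w` (Schur's test) this is at most the largest row sum of
`w` times `∑ dᵢ²`, and every row sum is at most `Φ₀ + 2 Φ₂`.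
-/

open MeasureTheory
open scoped BigOperators

/-- Variance of a real random variable: `Var(f) = E[f²] - (E[f])²`. -/
noncomputable def variance' {Ω : Type*} [MeasurableSpace Ω] (μ : Measure Ω) (f : Ω → ℝ) : ℝ :=
  (∫ ω, (f ω) ^ 2 ∂μ) - (∫ ω, f ω ∂μ) ^ 2

section Covariance

variable {Ω : Type*} [MeasurableSpace Ω] (μ : Measure Ω)

lemma cov_comm (f g : Ω → ℝ) : cov μ f g = cov μ g f := by
  simp only [cov, mul_comm]

lemma cov_self_le (f : Ω → ℝ) : cov μ f f ≤ ∫ ω, f ω * f ω ∂μ := by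
  have := sq_nonneg (∫ ω, f ω ∂μ)
  unfold cov
  nlinarith

lemma variance'_sum_eq_sum_cov {ι : Type*} [Fintype ι] (d : ι → ℝ) (F : ι → Ω → ℝ)
    (hF : ∀ i, Integrable (F i) μ) (hFF : ∀ i j, Integrable (fun ω => F i ω * F j ω) μ) :
    variance' μ (fun ω => ∑ i, d i * F i ω) = ∑ i, ∑ j, d i * d j * cov μ (F i) (F j) := by
  have hmean : ∫ ω, ∑ i, d i * F i ω ∂μ = ∑ i, d i * ∫ ω, F i ω ∂μ := by
    rw [integral_finsetSum _ fun i _ => (hF i).const_mul _]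
    simp_rw [integral_const_mul]
  have hsecond : ∫ ω, (∑ i, d i * F i ω) ^ 2 ∂μ
      = ∑ i, ∑ j, d i * d j * ∫ ω, F i ω * F j ω ∂μ := by
    have hexp : ∀ ω, (∑ i, d i * F i ω) ^ 2 = ∑ i, ∑ j, d i * d j * (F i ω * F j ω) := fun ω => by
      rw [sq, Finset.sum_mul_sum]
      exact Finset.sum_congr rfl fun i _ => Finset.sum_congr rfl fun j _ => by ring
    simp_rw [hexp]
    rw [integral_finsetSum _ fun i _ => integrable_finsetSum _ fun j _ => (hFF i j).const_mul _]
    refine Finset.sum_congr rfl fun i _ => ?_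
    rw [integral_finsetSum _ fun j _ => (hFF i j).const_mul _]
    simp_rw [integral_const_mul]
  rw [variance', hmean, hsecond, sq, Finset.sum_mul_sum, ← Finset.sum_sub_distrib]
  refine Finset.sum_congr rfl fun i _ => ?_
  rw [← Finset.sum_sub_distrib]
  refine Finset.sum_congr rfl fun j _ => ?_
  rw [cov]
  ring

end Covariance

instance : ENNReal.HolderTriple 4 4 2 where
  inv_add_inv_eq_inv := by
    rw [← two_mul, show (4 : ENNReal) = 2 * 2 by norm_num, ENNReal.mul_inv (by simp) (by simp),
      ← mul_assoc, ENNReal.mul_inv_cancel (by simp) (by simp), one_mul]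

lemma MeasureTheory.MemLp.sq {α : Type*} [MeasurableSpace α] {μ : Measure α} {f : α → ℝ}
    (hf : MemLp f 4 μ) : MemLp (fun x => f x ^ 2) 2 μ := by
  simpa only [pow_two] using hf.mul' (r := 2) hf

theorem sum_sum_mul_mul_le_of_sum_le {ι : Type*} [Fintype ι] (d : ι → ℝ) {w : ι → ι → ℝ} {C : ℝ}
    (hw : ∀ i j, 0 ≤ w i j) (hsymm : ∀ i j, w i j = w j i) (hrow : ∀ i, ∑ j, w i j ≤ C) :
    ∑ i, ∑ j, d i * d j * w i j ≤ C * ∑ i, d i ^ 2 := by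
  have hrows : ∑ i, ∑ j, d i ^ 2 * w i j ≤ C * ∑ i, d i ^ 2 := by
    rw [Finset.mul_sum]
    gcongr with i
    rw [← Finset.mul_sum, mul_comm]
    exact mul_le_mul_of_nonneg_right (hrow i) (sq_nonneg _)
  have hcols : ∑ i, ∑ j, d j ^ 2 * w i j = ∑ i, ∑ j, d i ^ 2 * w i j := by
    rw [Finset.sum_comm]
    simp_rw [hsymm]
  calc ∑ i, ∑ j, d i * d j * w i j
      ≤ ∑ i, ∑ j, (d i ^ 2 + d j ^ 2) / 2 * w i j := by
        gcongr with i _ j _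
        · exact hw i j
        · linarith [two_mul_le_add_sq (d i) (d j)]
    _ = (∑ i, ∑ j, d i ^ 2 * w i j + ∑ i, ∑ j, d j ^ 2 * w i j) / 2 := by
        simp only [add_div, add_mul, Finset.sum_add_distrib, div_mul_eq_mul_div, Finset.sum_div]
    _ ≤ C * ∑ i, d i ^ 2 := by linarith

section CovarianceBound

variable {ψ : ℕ → ℝ}

lemma sum_comp_le_tsum_succ {α : Type*} (hψ : ∀ k, 0 ≤ ψ k) (hsum : Summable fun k => ψ (k + 1))
    {s : Finset α} {f : α → ℕ} (hf : Set.InjOn f s) (hpos : ∀ x ∈ s, 0 < f x) :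
    ∑ x ∈ s, ψ (f x) ≤ ∑' k, ψ (k + 1) := by
  have hinj : Set.InjOn (fun x => f x - 1) s := fun x hx y hy hxy => by
    have := hpos x hx
    have := hpos y hy
    exact hf hx hy (by simp only at hxy; omega)
  have hshift : ∑ x ∈ s, ψ (f x) = ∑ k ∈ s.image (fun x => f x - 1), ψ (k + 1) := by
    rw [Finset.sum_image hinj]
    exact Finset.sum_congr rfl fun x hx => by rw [Nat.sub_add_cancel (hpos x hx)]
  exact hshift ▸ hsum.sum_le_tsum _ fun k _ => hψ _

noncomputable def covBound (Φ₀ : ℝ) (ψ : ℕ → ℝ) (i j : ℕ) : ℝ :=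
  if i = j then Φ₀ else ψ (Nat.dist i j)

variable {Φ₀ : ℝ}

lemma covBound_comm (i j : ℕ) : covBound Φ₀ ψ i j = covBound Φ₀ ψ j i := by
  simp only [covBound, eq_comm, Nat.dist_comm]

lemma covBound_nonneg (hΦ₀ : 0 ≤ Φ₀) (hψ : ∀ k, 0 ≤ ψ k) (i j : ℕ) : 0 ≤ covBound Φ₀ ψ i j := by
  unfold covBound
  split_ifs
  exacts [hΦ₀, hψ _]

lemma sum_covBound_le (hψ : ∀ k, 0 ≤ ψ k) (hsum : Summable fun k => ψ (k + 1))
    {s : Finset ℕ} {i : ℕ} (hi : i ∈ s) :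
    ∑ j ∈ s, covBound Φ₀ ψ i j ≤ Φ₀ + 2 * ∑' k, ψ (k + 1) := by
  have hsplit : ∑ j ∈ s, covBound Φ₀ ψ i j = Φ₀ + ∑ j ∈ s.erase i, ψ (Nat.dist i j) := by
    rw [← Finset.add_sum_erase s _ hi, covBound, if_pos rfl]
    congr 1
    exact Finset.sum_congr rfl fun j hj => if_neg (Finset.ne_of_mem_erase hj).symm
  have hpos : ∀ t ⊆ s.erase i, ∀ j ∈ t, 0 < Nat.dist i j := fun t ht j hj =>
    Nat.dist_pos_of_ne (Finset.ne_of_mem_erase (ht hj)).symm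
  have hbelow := sum_comp_le_tsum_succ hψ hsum (s := (s.erase i).filter (· < i))
    (fun x hx y hy hxy => by
      simp only [Finset.mem_coe, Finset.mem_filter] at hx hy
      unfold Nat.dist at hxy
      omega)
    (hpos _ (Finset.filter_subset _ _))
  have habove := sum_comp_le_tsum_succ hψ hsum (s := (s.erase i).filter (¬ · < i))
    (fun x hx y hy hxy => by
      simp only [Finset.mem_coe, Finset.mem_filter, Finset.mem_erase] at hx hy
      unfold Nat.dist at hxy
      omega)
    (hpos _ (Finset.filter_subset _ _))
  rw [hsplit, ← Finset.sum_filter_add_sum_filter_not _ (· < i)]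
  linarith

lemma cov_sq_le_covBound {Ω : Type*} [MeasurableSpace Ω] (μ : Measure Ω) {X : ℕ → Ω → ℝ}
    (hΦ₀ : ∀ k, ∫ ω, (X k ω) ^ 4 ∂μ ≤ Φ₀)
    (hcov : ∀ i j : ℕ, i < j →
      cov μ (fun ω => (X i ω) ^ 2) (fun ω => (X j ω) ^ 2) ≤ ψ (j - i)) (i j : ℕ) :
    cov μ (fun ω => X i ω ^ 2) (fun ω => X j ω ^ 2) ≤ covBound Φ₀ ψ i j := by
  unfold covBound
  split_ifs with hij
  · subst hij
    calc _ ≤ ∫ ω, X i ω ^ 2 * X i ω ^ 2 ∂μ := cov_self_le μ _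
      _ = ∫ ω, X i ω ^ 4 ∂μ := by simp_rw [← pow_add]
      _ ≤ Φ₀ := hΦ₀ i
  · rcases Nat.lt_or_gt_of_ne hij with hlt | hgt
    · rw [show Nat.dist i j = j - i by unfold Nat.dist; omega]
      exact hcov i j hlt
    · rw [cov_comm, show Nat.dist i j = i - j by unfold Nat.dist; omega]
      exact hcov j i hgt

end CovarianceBound

theorem variance_diagonal_quadratic_form_general {Ω : Type*} [MeasurableSpace Ω]
    (μ : Measure Ω) [IsProbabilityMeasure μ] (X : ℕ → Ω → ℝ) (ψ : ℕ → ℝ) (Φ₀ : ℝ)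
    (hL4 : ∀ k, MemLp (X k) 4 μ)
    (hΦ₀ : ∀ k, ∫ ω, (X k ω) ^ 4 ∂μ ≤ Φ₀)
    (hψ : ∀ k, 0 ≤ ψ k)
    (hψsum : Summable (fun k : ℕ => ψ (k + 1)))
    (hcov : ∀ i j : ℕ, i < j →
      cov μ (fun ω => (X i ω) ^ 2) (fun ω => (X j ω) ^ 2) ≤ ψ (j - i)) :
    ∀ (p : ℕ) (d : Fin p → ℝ), 1 ≤ p → (∀ i, 0 ≤ d i) →
      variance' μ (fun ω => ∑ i, d i * (X i ω) ^ 2) ≤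
        2 * (Φ₀ + ∑' k : ℕ, ψ (k + 1)) * ∑ i, (d i) ^ 2 := by
  intro p d _ hd
  have hΦ₀_nonneg : 0 ≤ Φ₀ := (integral_nonneg fun ω => by positivity).trans (hΦ₀ 0)
  have hsq : ∀ k, MemLp (fun ω => X k ω ^ 2) 2 μ := fun k => (hL4 k).sq
  have hrow : ∀ i : Fin p, ∑ j : Fin p, covBound Φ₀ ψ i j ≤ 2 * (Φ₀ + ∑' k, ψ (k + 1)) := by
    intro i
    rw [Fin.sum_univ_eq_sum_range (covBound Φ₀ ψ i) p]
    have := sum_covBound_le (Φ₀ := Φ₀) hψ hψsum (Finset.mem_range.2 i.2)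
    have : 0 ≤ ∑' k, ψ (k + 1) := tsum_nonneg fun k => hψ (k + 1)
    linarith
  rw [variance'_sum_eq_sum_cov μ d _ (fun i => (hsq i).integrable one_le_two)
    (fun i j => (hsq i).integrable_mul (hsq j))]
  calc _ ≤ ∑ i : Fin p, ∑ j : Fin p, d i * d j * covBound Φ₀ ψ i j := by
        gcongr with i _ j _
        · exact mul_nonneg (hd i) (hd j)
        · exact cov_sq_le_covBound μ hΦ₀ hcov i j
    _ ≤ _ := sum_sum_mul_mul_le_of_sum_le d (fun i j => covBound_nonneg hΦ₀_nonneg hψ i j)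
        (fun i j => covBound_comm i j) hrow

/-- For random variables with `E[X_k²] ≤ 1`, fourth moments bounded by `Φ₀`, and
`Cov(X_i², X_j²) ≤ ψ_{j−i}` with `Φ₂ = Σ_{k≥1} ψ_k < ∞`, for all non-negative `d_1, …, d_p`:
`Var(Σ dᵢ Xᵢ²) ≤ 2 (Φ₀ + Φ₂) Σ dᵢ²`. -/
theorem variance_diagonal_quadratic_form {Ω : Type*} [MeasurableSpace Ω]
    (μ : Measure Ω) [IsProbabilityMeasure μ] (X : ℕ → Ω → ℝ) (ψ : ℕ → ℝ) (Φ₀ : ℝ)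
    (hL4 : ∀ k, MemLp (X k) 4 μ)
    (hvar : ∀ k, ∫ ω, (X k ω) ^ 2 ∂μ ≤ 1)
    (hΦ₀ : ∀ k, ∫ ω, (X k ω) ^ 4 ∂μ ≤ Φ₀)
    (hψ : ∀ k, 0 ≤ ψ k)
    (hψsum : Summable (fun k : ℕ => ψ (k + 1)))
    (hcov : ∀ i j : ℕ, i < j →
      cov μ (fun ω => (X i ω) ^ 2) (fun ω => (X j ω) ^ 2) ≤ ψ (j - i)) :
    ∀ (p : ℕ) (d : Fin p → ℝ), 1 ≤ p → (∀ i, 0 ≤ d i) →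
      variance' μ (fun ω => ∑ i, d i * (X i ω) ^ 2) ≤
        2 * (Φ₀ + ∑' k : ℕ, ψ (k + 1)) * ∑ i, (d i) ^ 2 :=
  variance_diagonal_quadratic_form_general μ X ψ Φ₀ hL4 hΦ₀ hψ hψsum hcov
end

section
/- Let {X_k}_{k≥1} be centred random variables and {φ_k}_{k≥1} non-negative non-increasing reals such that |E[X_i X_j X_k X_l]| ≤ min{φ_{j−i}, φ_{l−k}} for all i < j < k < l, and set Φ₁ = Σ_{k=1}^∞ k·φ_k < ∞. Then for every p ≥ 1 and every a ∈ ℝ^p, |Σ_{1≤i<j<k<l≤p} a_i a_j a_k a_l E[X_i X_j X_k X_l]| ≤ Φ₁·(Σ_{i=1}^p a_i²)². -/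
/-!
The bound is purely combinatorial. By AM-GM, `2 |a_i a_j a_k a_l| ≤ a_i² a_k² + a_j² a_l²`, and
`min (φ (j - i)) (φ (l - k)) ≤ φ (max (j - i) (l - k))`. A quadruple `i < j < k < l` is determined
by the pair `(i, k)`, and also by the pair `(j, l)`, together with its gaps `(j - i, l - k) ∈ [1, p]²`,
so each of the two resulting sums is at most `Σ_{i<k} a_i² a_k² · Σ_{u,v ∈ [1,p]} φ (max u v)`.
Finally `Σ_{u,v ∈ [1,p]} φ (max u v) ≤ 2 Σ_m m φ_m` and `2 Σ_{i<k} a_i² a_k² ≤ (Σ_i a_i²)²`.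
-/

open MeasureTheory Finset

section OrderedSemiring

variable {R : Type*} [CommSemiring R] [PartialOrder R] [IsOrderedRing R]

theorem sum_mul_le_sum_mul_sum_of_injOn {ι α β : Type*} {s : Finset ι} {t : Finset α}
    {r : Finset β} {π : ι → α} {g : ι → β} {c : α → R} {w : β → R}
    (hc : ∀ x ∈ t, 0 ≤ c x) (hw : ∀ y ∈ r, 0 ≤ w y) (hmaps : ∀ q ∈ s, π q ∈ t ∧ g q ∈ r)
    (hinj : Set.InjOn (fun q => (π q, g q)) s) :
    ∑ q ∈ s, c (π q) * w (g q) ≤ (∑ x ∈ t, c x) * ∑ y ∈ r, w y := by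
  classical
  rw [sum_mul_sum, ← sum_product', ← sum_image (f := fun z => c z.1 * w z.2) hinj]
  refine sum_le_sum_of_subset_of_nonneg ?_ fun z hz _ => ?_
  · exact image_subset_iff.2 fun q hq => mem_product.2 (hmaps q hq)
  · exact mul_nonneg (hc _ (mem_product.1 hz).1) (hw _ (mem_product.1 hz).2)

theorem two_mul_sum_lt_le_sq_sum {ι : Type*} [Fintype ι] [LinearOrder ι] {x : ι → R}
    (hx : ∀ i, 0 ≤ x i) :
    2 * ∑ pr ∈ univ.filter (fun pr : ι × ι => pr.1 < pr.2), x pr.1 * x pr.2 ≤ (∑ i, x i) ^ 2 := by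
  rw [sum_filter, Fintype.sum_prod_type, sq, sum_mul_sum, two_mul]
  nth_rewrite 2 [sum_comm]
  rw [← sum_add_distrib]
  refine sum_le_sum fun i _ => ?_
  rw [← sum_add_distrib]
  refine sum_le_sum fun k _ => ?_
  rcases lt_trichotomy i k with h | rfl | h
  · simp [h, h.not_gt]
  · simp [mul_nonneg (hx i) (hx i)]
  · simp [h, h.not_gt, mul_comm]

theorem sum_Icc_sq_max_le {φ : ℕ → R} (hφ : ∀ k, 0 ≤ φ k) (n : ℕ) :
    ∑ uv ∈ Icc 1 n ×ˢ Icc 1 n, φ (max uv.1 uv.2) ≤ 2 * ∑ m ∈ Icc 1 n, (m : R) * φ m := by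
  have hmax : ∀ u v, φ (max u v) ≤ (if v ≤ u then φ u else 0) + (if u ≤ v then φ v else 0) := by
    intro u v
    rcases le_total v u with h | h
    · simpa [h] using le_add_of_nonneg_right (by split_ifs <;> simp [hφ])
    · simpa [h] using le_add_of_nonneg_left (by split_ifs <;> simp [hφ])
  have hcount : ∀ u ∈ Icc 1 n, ∑ v ∈ Icc 1 n, (if v ≤ u then φ u else 0) = u * φ u := by
    intro u hu
    have hIcc : (Icc 1 n).filter (· ≤ u) = Icc 1 u := by
      ext v; simp only [mem_filter, mem_Icc] at hu ⊢; omega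
    rw [← sum_filter, hIcc, sum_const, Nat.card_Icc, nsmul_eq_mul]
    simp
  calc ∑ uv ∈ Icc 1 n ×ˢ Icc 1 n, φ (max uv.1 uv.2)
      ≤ ∑ u ∈ Icc 1 n, ∑ v ∈ Icc 1 n,
          ((if v ≤ u then φ u else 0) + (if u ≤ v then φ v else 0)) := by
        rw [sum_product]; exact sum_le_sum fun u _ => sum_le_sum fun v _ => hmax u v
    _ = 2 * ∑ m ∈ Icc 1 n, (m : R) * φ m := by
        simp only [sum_add_distrib]
        rw [sum_comm (f := fun u v => if u ≤ v then φ v else 0), sum_congr rfl hcount, two_mul]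

end OrderedSemiring

theorem two_mul_abs_mul_mul_mul_le {R : Type*} [CommRing R] [LinearOrder R] [IsStrictOrderedRing R]
    (a b c d : R) : 2 * |a * b * c * d| ≤ (a * c) ^ 2 + (b * d) ^ 2 := by
  have h := two_mul_le_add_sq |a * c| |b * d|
  rwa [sq_abs, sq_abs, mul_assoc, ← abs_mul, show a * c * (b * d) = a * b * c * d by ring] at h

abbrev Quadruple (p : ℕ) : Type := Fin p × Fin p × Fin p × Fin p

def increasingQuadruples (p : ℕ) : Finset (Quadruple p) :=
  univ.filter fun q => q.1 < q.2.1 ∧ q.2.1 < q.2.2.1 ∧ q.2.2.1 < q.2.2.2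

def Quadruple.gaps {p : ℕ} (q : Quadruple p) : ℕ × ℕ :=
  ((q.2.1 : ℕ) - q.1, (q.2.2.2 : ℕ) - q.2.2.1)

namespace increasingQuadruples

variable {p : ℕ}

theorem sum_eq {M : Type*} [AddCommMonoid M] (f : Quadruple p → M) :
    ∑ q ∈ increasingQuadruples p, f q = ∑ i, ∑ j, ∑ k, ∑ l,
      if i < j ∧ j < k ∧ k < l then f (i, j, k, l) else 0 := by
  simp only [increasingQuadruples, sum_filter, Fintype.sum_prod_type]

theorem gaps_mem {q : Quadruple p} (hq : q ∈ increasingQuadruples p) :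
    q.gaps ∈ Icc 1 p ×ˢ Icc 1 p := by
  simp only [increasingQuadruples, mem_filter, Fin.lt_def] at hq
  simp only [Quadruple.gaps, mem_product, mem_Icc]
  omega

theorem injOn_fst_thd_gaps :
    Set.InjOn (fun q : Quadruple p => ((q.1, q.2.2.1), q.gaps)) (increasingQuadruples p) := by
  intro q hq q' hq' h
  simp only [increasingQuadruples, mem_coe, mem_filter, Fin.lt_def] at hq hq'
  simp only [Quadruple.gaps, Prod.ext_iff, Fin.ext_iff] at h ⊢
  omega

theorem injOn_snd_fth_gaps :
    Set.InjOn (fun q : Quadruple p => ((q.2.1, q.2.2.2), q.gaps)) (increasingQuadruples p) := by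
  intro q hq q' hq' h
  simp only [increasingQuadruples, mem_coe, mem_filter, Fin.lt_def] at hq hq'
  simp only [Quadruple.gaps, Prod.ext_iff, Fin.ext_iff] at h ⊢
  omega

end increasingQuadruples

theorem sum_increasingQuadruples_le {p : ℕ} {R : Type*} [CommSemiring R] [PartialOrder R]
    [IsOrderedRing R] {c : Fin p × Fin p → R} {w : ℕ × ℕ → R} (hc : ∀ x, 0 ≤ c x)
    (hw : ∀ y, 0 ≤ w y) :
    ∑ q ∈ increasingQuadruples p, (c (q.1, q.2.2.1) + c (q.2.1, q.2.2.2)) * w q.gaps ≤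
      2 * (∑ pr ∈ univ.filter (fun pr : Fin p × Fin p => pr.1 < pr.2), c pr) *
        ∑ uv ∈ Icc 1 p ×ˢ Icc 1 p, w uv := by
  have hlt : ∀ q ∈ increasingQuadruples p, q.1 < q.2.2.1 ∧ q.2.1 < q.2.2.2 := fun q hq => by
    obtain ⟨hij, hjk, hkl⟩ := (mem_filter.1 hq).2
    exact ⟨hij.trans hjk, hjk.trans hkl⟩
  simp only [add_mul, sum_add_distrib, two_mul]
  refine add_le_add ?_ ?_
  · exact sum_mul_le_sum_mul_sum_of_injOn (fun x _ => hc x) (fun y _ => hw y)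
      (fun q hq => ⟨by simpa using (hlt q hq).1, increasingQuadruples.gaps_mem hq⟩)
      increasingQuadruples.injOn_fst_thd_gaps
  · exact sum_mul_le_sum_mul_sum_of_injOn (fun x _ => hc x) (fun y _ => hw y)
      (fun q hq => ⟨by simpa using (hlt q hq).2, increasingQuadruples.gaps_mem hq⟩)
      increasingQuadruples.injOn_snd_fth_gaps

theorem abs_sum_increasingQuadruples_le {p : ℕ} {a : Fin p → ℝ} {E : Quadruple p → ℝ}
    {φ : ℕ → ℝ} (hφ : ∀ k, 0 ≤ φ k)
    (hE : ∀ q ∈ increasingQuadruples p, |E q| ≤ φ (max q.gaps.1 q.gaps.2)) :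
    |∑ q ∈ increasingQuadruples p, a q.1 * a q.2.1 * a q.2.2.1 * a q.2.2.2 * E q| ≤
      (∑ m ∈ Icc 1 p, (m : ℝ) * φ m) * (∑ i, a i ^ 2) ^ 2 := by
  set c : Fin p × Fin p → ℝ := fun pr => (a pr.1 * a pr.2) ^ 2
  set T := ∑ pr ∈ univ.filter (fun pr : Fin p × Fin p => pr.1 < pr.2), c pr
  set W := ∑ uv ∈ Icc 1 p ×ˢ Icc 1 p, φ (max uv.1 uv.2)
  have hT : 2 * T ≤ (∑ i, a i ^ 2) ^ 2 := by
    simp only [T, c, mul_pow]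
    exact two_mul_sum_lt_le_sq_sum fun i => sq_nonneg (a i)
  have hW : W ≤ 2 * ∑ m ∈ Icc 1 p, (m : ℝ) * φ m := sum_Icc_sq_max_le hφ p
  have hS : 2 * |∑ q ∈ increasingQuadruples p, a q.1 * a q.2.1 * a q.2.2.1 * a q.2.2.2 * E q| ≤
      2 * T * W := calc
    _ ≤ ∑ q ∈ increasingQuadruples p, 2 * |a q.1 * a q.2.1 * a q.2.2.1 * a q.2.2.2 * E q| := by
        rw [← mul_sum]; exact mul_le_mul_of_nonneg_left (abs_sum_le_sum_abs _ _) zero_le_two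
    _ ≤ ∑ q ∈ increasingQuadruples p,
          (c (q.1, q.2.2.1) + c (q.2.1, q.2.2.2)) * φ (max q.gaps.1 q.gaps.2) := by
        refine sum_le_sum fun q hq => ?_
        rw [abs_mul, ← mul_assoc]
        exact mul_le_mul (two_mul_abs_mul_mul_mul_le _ _ _ _) (hE q hq) (abs_nonneg _)
          (add_nonneg (sq_nonneg _) (sq_nonneg _))
    _ ≤ 2 * T * W := sum_increasingQuadruples_le (w := fun uv => φ (max uv.1 uv.2))
          (fun _ => sq_nonneg _) (fun uv => hφ (max uv.1 uv.2))
  have hT0 : 0 ≤ T := sum_nonneg fun _ _ => sq_nonneg _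
  have hΦ0 : 0 ≤ ∑ m ∈ Icc 1 p, (m : ℝ) * φ m :=
    sum_nonneg fun m _ => mul_nonneg m.cast_nonneg (hφ m)
  nlinarith [mul_le_mul_of_nonneg_left hW hT0, mul_le_mul_of_nonneg_right hT hΦ0]

theorem abs_quadruple_sum_le_general {Ω : Type*} [MeasurableSpace Ω]
    (μ : Measure Ω) (X : ℕ → Ω → ℝ) (φ : ℕ → ℝ)
    (hφ : ∀ k, 0 ≤ φ k)
    (hbound : ∀ i j k l : ℕ, i < j → j < k → k < l →
      |∫ ω, X i ω * X j ω * X k ω * X l ω ∂μ| ≤ min (φ (j - i)) (φ (l - k)))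
    (hsum : Summable (fun k : ℕ => (k : ℝ) * φ k)) :
    ∀ (p : ℕ) (a : Fin p → ℝ),
      |∑ i : Fin p, ∑ j : Fin p, ∑ k : Fin p, ∑ l : Fin p,
          (if i < j ∧ j < k ∧ k < l then
            a i * a j * a k * a l * ∫ ω, X i ω * X j ω * X k ω * X l ω ∂μ
          else 0)| ≤
        (∑' k : ℕ, (k : ℝ) * φ k) * (∑ i, (a i) ^ 2) ^ 2 := by
  intro p a
  have hE : ∀ q ∈ increasingQuadruples p,
      |∫ ω, X q.1 ω * X q.2.1 ω * X q.2.2.1 ω * X q.2.2.2 ω ∂μ| ≤ φ (max q.gaps.1 q.gaps.2) := by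
    intro q hq
    obtain ⟨hij, hjk, hkl⟩ := (mem_filter.1 hq).2
    refine (hbound _ _ _ _ hij hjk hkl).trans ?_
    rcases max_choice q.gaps.1 q.gaps.2 with h | h <;> rw [h]
    exacts [min_le_left _ _, min_le_right _ _]
  rw [← increasingQuadruples.sum_eq fun q => a q.1 * a q.2.1 * a q.2.2.1 * a q.2.2.2 *
    ∫ ω, X q.1 ω * X q.2.1 ω * X q.2.2.1 ω * X q.2.2.2 ω ∂μ]
  refine (abs_sum_increasingQuadruples_le hφ hE).trans
    (mul_le_mul_of_nonneg_right ?_ (sq_nonneg _))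
  exact hsum.sum_le_tsum _ fun m _ => mul_nonneg m.cast_nonneg (hφ m)

/-- For centred random variables with `|E[X_i X_j X_k X_l]| ≤ min{φ_{j−i}, φ_{l−k}}` for
`i < j < k < l` and `Φ₁ = Σ k φ_k < ∞`, the quadruple sum satisfies
`|Σ_{i<j<k<l} a_i a_j a_k a_l E[X_i X_j X_k X_l]| ≤ Φ₁ (Σ aᵢ²)²`. -/
theorem abs_quadruple_sum_le {Ω : Type*} [MeasurableSpace Ω]
    (μ : Measure Ω) [IsProbabilityMeasure μ] (X : ℕ → Ω → ℝ) (φ : ℕ → ℝ)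
    (hL4 : ∀ k, MemLp (X k) 4 μ)
    (hcent : ∀ k, ∫ ω, X k ω ∂μ = 0)
    (hφ : ∀ k, 0 ≤ φ k)
    (hmono : ∀ k l : ℕ, 1 ≤ k → k ≤ l → φ l ≤ φ k)
    (hbound : ∀ i j k l : ℕ, i < j → j < k → k < l →
      |∫ ω, X i ω * X j ω * X k ω * X l ω ∂μ| ≤ min (φ (j - i)) (φ (l - k)))
    (hsum : Summable (fun k : ℕ => (k : ℝ) * φ k)) :
    ∀ (p : ℕ) (a : Fin p → ℝ),
      |∑ i : Fin p, ∑ j : Fin p, ∑ k : Fin p, ∑ l : Fin p,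
          (if i < j ∧ j < k ∧ k < l then
            a i * a j * a k * a l * ∫ ω, X i ω * X j ω * X k ω * X l ω ∂μ
          else 0)| ≤
        (∑' k : ℕ, (k : ℝ) * φ k) * (∑ i, (a i) ^ 2) ^ 2 :=
  abs_quadruple_sum_le_general μ X φ hφ hbound hsum
end

section
/- Let C: ℕ → ℝ and K: [0,∞) → ℝ be such that: K(0) = 1, K is continuous at 0, M = sup_{x≥0}|K(x)| < ∞; the limit k_q = lim_{x→0+} x^{−q}(K(x) − 1) exists for some q > 0; and Σ_{j=1}^∞ j^q·|C(j)| < ∞. Then m^q·Σ_{j=1}^n (K(j/m) − 1)·C(j) → k_q·Σ_{j=1}^∞ j^q·C(j) as m, n → ∞. -/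
open Filter
open scoped BigOperators Topology

/-!
Writing `g x = (K x - 1) / x ^ q`, each summand is `g (j/m) · j^q C(j)`, so the quantity is the
series `∑_j 1_{1 ≤ j ≤ n} g(j/m) j^q C(j)`. Its terms converge to `k_q j^q C(j)` as `m, n → ∞`,
and `g` is bounded on `(0, ∞)` (near `0` by the limit, away from `0` since `K` is bounded), so
they are dominated by the summable `B j^q |C(j)|`; Tannery's theorem concludes.
-/

open Finset

theorem exists_abs_div_rpow_le_of_tendsto {f : ℝ → ℝ} {q a M : ℝ} (hq : 0 ≤ q)
    (hM : ∀ x, 0 < x → |f x| ≤ M) (hf : Tendsto (fun x => f x / x ^ q) (𝓝[>] 0) (𝓝 a)) :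
    ∃ B, ∀ x, 0 < x → |f x / x ^ q| ≤ B := by
  have hnear : ∀ᶠ x in 𝓝[>] 0, |f x / x ^ q| < |a| + 1 :=
    hf.abs.eventually (gt_mem_nhds (lt_add_one _))
  obtain ⟨δ, hδ, hδsub⟩ := mem_nhdsGT_iff_exists_Ioo_subset.mp hnear
  refine ⟨max (|a| + 1) (M / δ ^ q), fun x hx => ?_⟩
  rcases lt_or_ge x δ with hxδ | hδx
  · exact (hδsub ⟨hx, hxδ⟩).le.trans (le_max_left _ _)
  · have hδq : 0 < δ ^ q := Real.rpow_pos_of_pos hδ q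
    calc |f x / x ^ q| = |f x| / x ^ q := by rw [abs_div, abs_of_pos (Real.rpow_pos_of_pos hx q)]
      _ ≤ M / δ ^ q := div_le_div₀ ((abs_nonneg _).trans (hM x hx)) (hM x hx) hδq
          (Real.rpow_le_rpow hδ.le hδx hq)
      _ ≤ _ := le_max_right _ _

theorem tendsto_const_div_natCast_nhdsGT_zero {c : ℝ} (hc : 0 < c) :
    Tendsto (fun m : ℕ => c / m) atTop (𝓝[>] 0) :=
  tendsto_nhdsWithin_iff.mpr ⟨tendsto_const_div_atTop_nhds_zero_nat c,
    (eventually_gt_atTop 0).mono fun _ hm => div_pos hc (Nat.cast_pos.mpr hm)⟩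

theorem tendsto_indicator_Icc_mul_comp_div {g : ℝ → ℝ} {a : ℝ} (w : ℕ → ℝ)
    (hg : Tendsto g (𝓝[>] 0) (𝓝 a)) (hw : w 0 = 0) (j : ℕ) :
    Tendsto (fun p : ℕ × ℕ => (Icc 1 p.2 : Set ℕ).indicator (fun i => g (i / p.1) * w i) j)
      (atTop ×ˢ atTop) (𝓝 (a * w j)) := by
  rcases Nat.eq_zero_or_pos j with rfl | hj
  · simp [hw]
  have hlim : Tendsto (fun p : ℕ × ℕ => g (j / p.1) * w j) (atTop ×ˢ atTop) (𝓝 (a * w j)) :=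
    ((hg.comp (tendsto_const_div_natCast_nhdsGT_zero (Nat.cast_pos.mpr hj))).comp
      tendsto_fst).mul_const _
  refine hlim.congr' ?_
  filter_upwards [tendsto_snd.eventually (eventually_ge_atTop j)] with p hp
  rw [Set.indicator_of_mem (mem_coe.mpr (mem_Icc.mpr ⟨hj, hp⟩))]

theorem rpow_mul_mul_eq_div_rpow_div_mul {x y : ℝ} (hx : 0 < x) (hy : 0 < y) (q s c : ℝ) :
    y ^ q * (s * c) = s / (x / y) ^ q * (x ^ q * c) := by
  have hxq : 0 < x ^ q := Real.rpow_pos_of_pos hx q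
  have hyq : 0 < y ^ q := Real.rpow_pos_of_pos hy q
  rw [Real.div_rpow hx.le hy.le]
  field_simp

theorem kernel_bias_rate_general (C : ℕ → ℝ) (K : ℝ → ℝ) (q kq M : ℝ)
    (hq : 0 < q)
    (hM : ∀ x : ℝ, 0 ≤ x → |K x| ≤ M)
    (hkq : Tendsto (fun x : ℝ => (K x - 1) / x ^ q) (𝓝[>] 0) (𝓝 kq))
    (hCsum : Summable (fun j : ℕ => (j : ℝ) ^ q * |C j|)) :
    Tendsto
      (fun p : ℕ × ℕ =>
        (p.1 : ℝ) ^ q * ∑ j ∈ Finset.Icc 1 p.2, (K ((j : ℝ) / (p.1 : ℝ)) - 1) * C j)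
      (atTop ×ˢ atTop) (𝓝 (kq * ∑' j : ℕ, (j : ℝ) ^ q * C j)) := by
  set g : ℝ → ℝ := fun x => (K x - 1) / x ^ q
  obtain ⟨B, hB⟩ := exists_abs_div_rpow_le_of_tendsto (f := fun x => K x - 1)
    (M := M + 1) hq.le (fun x hx => (abs_sub _ _).trans (by simpa using hM x hx.le)) hkq
  have hB0 : 0 ≤ B := (abs_nonneg _).trans (hB 1 one_pos)
  set F : ℕ × ℕ → ℕ → ℝ := fun p =>
    (Icc 1 p.2 : Set ℕ).indicator fun j => g (j / p.1) * ((j : ℝ) ^ q * C j)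
  have hbound : ∀ p : ℕ × ℕ, 0 < p.1 → ∀ j, ‖F p j‖ ≤ B * ((j : ℝ) ^ q * |C j|) := by
    intro p hp j
    rw [norm_indicator_eq_indicator_norm]
    refine Set.indicator_apply_le' (fun hj => ?_) fun _ => by positivity
    have hj : 0 < j := (mem_Icc.mp hj).1
    rw [norm_mul, Real.norm_eq_abs, Real.norm_eq_abs, abs_mul,
      abs_of_nonneg (Real.rpow_nonneg (Nat.cast_nonneg j) q)]
    exact mul_le_mul_of_nonneg_right (hB _ (by positivity)) (by positivity)
  have hlim := tendsto_tsum_of_dominated_convergence (f := F) (hCsum.mul_left B)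
    (tendsto_indicator_Icc_mul_comp_div _ hkq (by simp [Real.zero_rpow hq.ne']))
    ((tendsto_fst.eventually (eventually_gt_atTop 0)).mono hbound)
  rw [tsum_mul_left] at hlim
  refine hlim.congr' ?_
  filter_upwards [tendsto_fst.eventually (eventually_gt_atTop 0)] with p hp
  rw [← sum_eq_tsum_indicator, mul_sum]
  exact sum_congr rfl fun j hj => (rpow_mul_mul_eq_div_rpow_div_mul
    (Nat.cast_pos.mpr (mem_Icc.mp hj).1) (Nat.cast_pos.mpr hp) _ _ _).symm

/-- If `K(0) = 1`, `K` is continuous at `0` and bounded on `[0, ∞)`, the limit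
`k_q = lim_{x→0+} x^{−q} (K(x) − 1)` exists for some `q > 0`, and `Σ_j j^q |C(j)| < ∞`, then
`m^q Σ_{j=1}^n (K(j/m) − 1) C(j) → k_q Σ_{j=1}^∞ j^q C(j)` as `m, n → ∞`. -/
theorem kernel_bias_rate (C : ℕ → ℝ) (K : ℝ → ℝ) (q kq M : ℝ)
    (hq : 0 < q)
    (hK0 : K 0 = 1)
    (hKcont : ContinuousWithinAt K (Set.Ici 0) 0)
    (hM : ∀ x : ℝ, 0 ≤ x → |K x| ≤ M)
    (hkq : Tendsto (fun x : ℝ => (K x - 1) / x ^ q) (𝓝[>] 0) (𝓝 kq))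
    (hCsum : Summable (fun j : ℕ => (j : ℝ) ^ q * |C j|)) :
    Tendsto
      (fun p : ℕ × ℕ =>
        (p.1 : ℝ) ^ q * ∑ j ∈ Finset.Icc 1 p.2, (K ((j : ℝ) / (p.1 : ℝ)) - 1) * C j)
      (atTop ×ˢ atTop) (𝓝 (kq * ∑' j : ℕ, (j : ℝ) ^ q * C j)) :=
  kernel_bias_rate_general C K q kq M hq hM hkq hCsum
end

section
/- Let {X_k}_{k≥1} be a martingale difference sequence (with respect to its natural filtration) with E[X_k] = 0, E[X_k²] ≤ 1, and Φ₀ = sup_k E[X_k⁴] < ∞. Then there is a universal constant C > 0 such that for every p ≥ 1 and every p×p real matrix A with zero diagonal, Var(X_pᵀ A X_p) ≤ C·Φ₀·tr(A Aᵀ), where X_p = (X_1,…,X_p). -/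
/-!
With zero diagonal, the quadratic form is `Q = ∑ₖ Xₖ Yₖ` where `Yₖ = ∑_{i<k} (aᵢₖ + aₖᵢ) Xᵢ` is
measurable with respect to `X₀, …, Xₖ₋₁`. The martingale difference property makes the summands
`Xₖ Yₖ` orthogonal, so `E Q² = ∑ₖ E[Xₖ² Yₖ²]`, and Cauchy–Schwarz bounds each term by
`(E Xₖ⁴ · E Yₖ⁴)^{1/2}`. The fourth moment of a martingale transform `∑ᵢ cᵢ Xᵢ` is at most
`16 Φ₀ (∑ᵢ cᵢ²)²`, by induction on the number of terms: in the expansion of `E (b g + f)⁴` the term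
`E[f³ g]` vanishes by the martingale property and the others are controlled by Cauchy–Schwarz.
Summing up, `Var Q ≤ E Q² ≤ 8 Φ₀ tr(A Aᵀ)`.
-/

open MeasureTheory Filter Matrix
open scoped BigOperators Topology

open scoped ENNReal
open Finset

lemma sum_range_quadForm_eq {R : Type*} [CommRing R] (a : ℕ → ℕ → R) (ha : ∀ i, a i i = 0)
    (x : ℕ → R) (p : ℕ) :
    ∑ i ∈ range p, ∑ j ∈ range p, a i j * x i * x j
      = ∑ j ∈ range p, x j * ∑ i ∈ range j, (a i j + a j i) * x i := by
  induction p with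
  | zero => simp
  | succ p ih =>
    simp only [sum_range_succ, sum_add_distrib, ih, ha, zero_mul, add_zero, add_assoc]
    congr 1
    rw [mul_sum, ← sum_add_distrib]
    exact sum_congr rfl fun i _ => by ring

lemma sum_range_sum_range_add_sq_le (a : ℕ → ℕ → ℝ) (ha : ∀ i, a i i = 0) (p : ℕ) :
    ∑ j ∈ range p, ∑ i ∈ range j, (a i j + a j i) ^ 2
      ≤ 2 * ∑ i ∈ range p, ∑ j ∈ range p, a i j ^ 2 := by
  have key := sum_range_quadForm_eq (fun i j => a i j ^ 2) (by simp [ha]) (fun _ => 1) p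
  simp only [mul_one, one_mul] at key
  rw [key, mul_sum]
  gcongr with j
  rw [mul_sum]
  gcongr with i
  nlinarith [sq_nonneg (a i j - a j i)]

lemma pow_four_step_bound {Ef T2 T1 Eg Φ s b : ℝ} (hs : 0 ≤ s) (hEg0 : 0 ≤ Eg)
    (hEf : Ef ≤ 16 * Φ * s ^ 2) (hEg : Eg ≤ Φ) (hT2 : T2 ^ 2 ≤ Ef * Eg)
    (hT1 : T1 ^ 2 ≤ T2 * Eg) :
    Ef + 6 * b ^ 2 * T2 + 4 * b ^ 3 * T1 + b ^ 4 * Eg ≤ 16 * Φ * (b ^ 2 + s) ^ 2 := by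
  have hΦ : 0 ≤ Φ := hEg0.trans hEg
  have hT2le : T2 ≤ 4 * Φ * s := by
    refine abs_le_of_sq_le_sq' ?_ (by positivity) |>.2
    calc T2 ^ 2 ≤ Ef * Eg := hT2
      _ ≤ 16 * Φ * s ^ 2 * Φ := mul_le_mul hEf hEg hEg0 (by positivity)
      _ = (4 * Φ * s) ^ 2 := by ring
  -- `4 b² s ≤ (b² + s)²` lets the odd term `b³ T1` be absorbed into the square
  have hbT1 : b * T1 ≤ Φ * (b ^ 2 + s) := by
    refine abs_le_of_sq_le_sq' ?_ (by positivity) |>.2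
    calc (b * T1) ^ 2 ≤ b ^ 2 * (4 * Φ * s * Φ) := by
          rw [mul_pow]
          gcongr
          exact hT1.trans (mul_le_mul hT2le hEg hEg0 (by positivity))
      _ ≤ (Φ * (b ^ 2 + s)) ^ 2 := by nlinarith [sq_nonneg (b ^ 2 - s), sq_nonneg Φ]
  nlinarith [mul_le_mul_of_nonneg_left hbT1 (sq_nonneg b),
    mul_le_mul_of_nonneg_left hT2le (sq_nonneg b),
    mul_le_mul_of_nonneg_left hEg (pow_two_nonneg (b ^ 2)),
    mul_nonneg hΦ (pow_two_nonneg (b ^ 2)), mul_nonneg (mul_nonneg hΦ hs) (sq_nonneg b)]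

section Lp

variable {Ω : Type*} [MeasurableSpace Ω] {μ : Measure Ω} {f g : Ω → ℝ}

lemma MeasureTheory.MemLp.mul_of_four (hf : MemLp f 4 μ) (hg : MemLp g 4 μ) :
    MemLp (fun ω => f ω * g ω) 2 μ :=
  haveI : ENNReal.HolderTriple 4 4 2 := ⟨by
    rw [← ENNReal.add_halves (2 : ℝ≥0∞)⁻¹, ENNReal.div_eq_inv_mul,
      ← ENNReal.mul_inv (by simp) (by simp)]
    norm_num⟩
  hg.mul' hf

lemma integrable_mul_mul_of_memLp_four {h k : Ω → ℝ} (hf : MemLp f 4 μ) (hg : MemLp g 4 μ)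
    (hh : MemLp h 4 μ) (hk : MemLp k 4 μ) :
    Integrable (fun ω => f ω * g ω * (h ω * k ω)) μ :=
  (hf.mul_of_four hg).integrable_mul (hh.mul_of_four hk)

lemma sq_integral_mul_le (hf : MemLp f 2 μ) (hg : MemLp g 2 μ) :
    (∫ ω, f ω * g ω ∂μ) ^ 2 ≤ (∫ ω, f ω ^ 2 ∂μ) * ∫ ω, g ω ^ 2 ∂μ := by
  have hff : Integrable (fun ω => f ω ^ 2) μ := hf.integrable_sq
  have hgg : Integrable (fun ω => g ω ^ 2) μ := hg.integrable_sq
  have hfg : Integrable (fun ω => f ω * g ω) μ := hf.integrable_mul hg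
  have hdisc := discrim_le_zero (K := ℝ) fun t =>
    calc (0 : ℝ) ≤ ∫ ω, (t * g ω + f ω) ^ 2 ∂μ := integral_nonneg fun ω => sq_nonneg _
      _ = ∫ ω, (t * t * g ω ^ 2 + 2 * t * (f ω * g ω) + f ω ^ 2) ∂μ := by
        congr with ω; ring
      _ = (∫ ω, g ω ^ 2 ∂μ) * (t * t) + 2 * (∫ ω, f ω * g ω ∂μ) * t + ∫ ω, f ω ^ 2 ∂μ := by
        rw [integral_add (by fun_prop) hff, integral_add (by fun_prop) (by fun_prop),
          integral_const_mul, integral_const_mul]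
        ring
  rw [discrim] at hdisc
  linarith

lemma sq_integral_mul_sq_le (hf : MemLp f 4 μ) (hg : MemLp g 4 μ) :
    (∫ ω, (f ω * g ω) ^ 2 ∂μ) ^ 2 ≤ (∫ ω, f ω ^ 4 ∂μ) * ∫ ω, g ω ^ 4 ∂μ := by
  have h := sq_integral_mul_le (hf.mul_of_four hf) (hg.mul_of_four hg)
  convert h using 3 <;> congr with ω <;> ring

lemma integral_sq_sum_eq_of_orthogonal {Ω ι : Type*} [MeasurableSpace Ω] {μ : Measure Ω}
    [LinearOrder ι] {Z : ι → Ω → ℝ} (s : Finset ι)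
    (hint : ∀ i ∈ s, ∀ j ∈ s, Integrable (fun ω => Z i ω * Z j ω) μ)
    (horth : ∀ i ∈ s, ∀ j ∈ s, i < j → ∫ ω, Z i ω * Z j ω ∂μ = 0) :
    ∫ ω, (∑ i ∈ s, Z i ω) ^ 2 ∂μ = ∑ i ∈ s, ∫ ω, Z i ω ^ 2 ∂μ := by
  simp_rw [sq, sum_mul_sum]
  rw [integral_finsetSum _ fun i hi => integrable_finsetSum _ fun j hj => hint i hi j hj]
  refine sum_congr rfl fun i hi => ?_
  rw [integral_finsetSum _ fun j hj => hint i hi j hj]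
  refine sum_eq_single i (fun j hj hji => ?_) (absurd hi)
  rcases hji.lt_or_gt with hlt | hlt
  · simp_rw [mul_comm (Z i _)]
    exact horth j hj i hi hlt
  · exact horth i hi j hj hlt

lemma integral_mul_add_pow_four_le {Φ s : ℝ} (b : ℝ) (hf : MemLp f 4 μ) (hg : MemLp g 4 μ)
    (horth : ∫ ω, f ω ^ 3 * g ω ∂μ = 0) (hs : 0 ≤ s)
    (hfΦ : ∫ ω, f ω ^ 4 ∂μ ≤ 16 * Φ * s ^ 2) (hgΦ : ∫ ω, g ω ^ 4 ∂μ ≤ Φ) :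
    ∫ ω, (b * g ω + f ω) ^ 4 ∂μ ≤ 16 * Φ * (b ^ 2 + s) ^ 2 := by
  have I4 := integrable_mul_mul_of_memLp_four hf hf hf hf
  have I3 := integrable_mul_mul_of_memLp_four hf hf hf hg
  have I2 := integrable_mul_mul_of_memLp_four hf hg hf hg
  have I1 := integrable_mul_mul_of_memLp_four hf hg hg hg
  have I0 := integrable_mul_mul_of_memLp_four hg hg hg hg
  have hexp : ∫ ω, (b * g ω + f ω) ^ 4 ∂μ = ∫ ω, f ω ^ 4 ∂μ + 4 * b * ∫ ω, f ω ^ 3 * g ω ∂μ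
      + 6 * b ^ 2 * ∫ ω, (f ω * g ω) ^ 2 ∂μ
      + 4 * b ^ 3 * ∫ ω, f ω * g ω * (g ω * g ω) ∂μ + b ^ 4 * ∫ ω, g ω ^ 4 ∂μ := by
    calc ∫ ω, (b * g ω + f ω) ^ 4 ∂μ
        = ∫ ω, (f ω * f ω * (f ω * f ω) + 4 * b * (f ω * f ω * (f ω * g ω))
            + 6 * b ^ 2 * (f ω * g ω * (f ω * g ω)) + 4 * b ^ 3 * (f ω * g ω * (g ω * g ω))
            + b ^ 4 * (g ω * g ω * (g ω * g ω))) ∂μ := by congr with ω; ring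
      _ = _ := by
        rw [integral_add (by fun_prop) (by fun_prop), integral_add (by fun_prop) (by fun_prop),
          integral_add (by fun_prop) (by fun_prop), integral_add I4 (by fun_prop)]
        simp only [integral_const_mul]
        congr 4 <;> congr with ω <;> ring
  have hT1 := sq_integral_mul_le (hf.mul_of_four hg) (hg.mul_of_four hg)
  have hg4 : ∫ ω, (g ω * g ω) ^ 2 ∂μ = ∫ ω, g ω ^ 4 ∂μ := by congr with ω; ring
  rw [hg4] at hT1
  rw [hexp, horth, mul_zero, add_zero]
  exact pow_four_step_bound hs (integral_nonneg fun ω => by positivity) hfΦ hgΦ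
    (sq_integral_mul_sq_le hf hg) hT1

end Lp

section Martingale

variable {Ω : Type*} {mΩ : MeasurableSpace Ω} {μ : Measure Ω}

lemma integral_mul_eq_zero_of_condExp_eq_zero {m : MeasurableSpace Ω} (hm : m ≤ mΩ)
    [SigmaFinite (μ.trim hm)] {f ξ : Ω → ℝ} (hξ0 : μ[ξ | m] =ᵐ[μ] 0)
    (hf : StronglyMeasurable[m] f) (hfξ : Integrable (f * ξ) μ) (hξ : Integrable ξ μ) :
    ∫ ω, f ω * ξ ω ∂μ = 0 :=
  calc ∫ ω, f ω * ξ ω ∂μ = ∫ ω, (μ[f * ξ | m]) ω ∂μ := (integral_condExp hm).symm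
    _ = ∫ ω, (f * μ[ξ | m]) ω ∂μ :=
        integral_congr_ae (condExp_mul_of_stronglyMeasurable_left hf hfξ hξ)
    _ = ∫ _, 0 ∂μ := integral_congr_ae (hξ0.mono fun ω hω => by simp [hω])
    _ = 0 := integral_zero Ω ℝ

abbrev pastSigma (X : ℕ → Ω → ℝ) (k : ℕ) : MeasurableSpace Ω :=
  MeasurableSpace.comap (fun ω (i : Fin k) => X i ω) MeasurableSpace.pi

variable {X : ℕ → Ω → ℝ}

lemma pastSigma_le (hX : ∀ k, Measurable (X k)) (k : ℕ) : pastSigma X k ≤ mΩ :=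
  (measurable_pi_lambda (fun ω (i : Fin k) => X i ω) fun i => hX i).comap_le

lemma measurable_pastSigma {i k : ℕ} (hik : i < k) : Measurable[pastSigma X k] (X i) :=
  (measurable_pi_apply (⟨i, hik⟩ : Fin k)).comp (comap_measurable fun ω (j : Fin k) => X j ω)

lemma measurable_pastSigma_sum (c : ℕ → ℝ) {s : Finset ℕ} {k : ℕ} (hs : ∀ i ∈ s, i < k) :
    Measurable[pastSigma X k] fun ω => ∑ i ∈ s, c i * X i ω :=
  Finset.measurable_sum s fun i hi => (measurable_pastSigma (hs i hi)).const_mul (c i)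

variable [IsFiniteMeasure μ] {Φ : ℝ}

lemma integral_mul_eq_zero_of_pastSigma (hX : ∀ k, Measurable (X k))
    (hmds : ∀ k, μ[X k | pastSigma X k] =ᵐ[μ] 0) {k : ℕ} {f : Ω → ℝ}
    (hXk : Integrable (X k) μ) (hf : Measurable[pastSigma X k] f)
    (hfX : Integrable (fun ω => f ω * X k ω) μ) :
    ∫ ω, f ω * X k ω ∂μ = 0 :=
  integral_mul_eq_zero_of_condExp_eq_zero (pastSigma_le hX k) (hmds k) hf.stronglyMeasurable hfX
    hXk

theorem integral_sum_mul_pow_four_le (hX : ∀ k, Measurable (X k)) (hX4 : ∀ k, MemLp (X k) 4 μ)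
    (hmds : ∀ k, μ[X k | pastSigma X k] =ᵐ[μ] 0) (hΦ : ∀ k, ∫ ω, X k ω ^ 4 ∂μ ≤ Φ)
    (c : ℕ → ℝ) (s : Finset ℕ) :
    ∫ ω, (∑ i ∈ s, c i * X i ω) ^ 4 ∂μ ≤ 16 * Φ * (∑ i ∈ s, c i ^ 2) ^ 2 := by
  induction s using Finset.induction_on_max with
  | empty => simp
  | insert a s hlt ih =>
    have ha : a ∉ s := fun h => lt_irrefl a (hlt a h)
    have hS4 : MemLp (fun ω => ∑ i ∈ s, c i * X i ω) 4 μ :=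
      memLp_finsetSum s fun i _ => (hX4 i).const_mul (c i)
    simp only [sum_insert ha]
    refine integral_mul_add_pow_four_le (c a) hS4 (hX4 a) ?_ (by positivity) ih (hΦ a)
    refine integral_mul_eq_zero_of_pastSigma hX hmds ((hX4 a).integrable (by norm_num))
      ((measurable_pastSigma_sum c hlt).pow_const 3) ?_
    exact (integrable_mul_mul_of_memLp_four hS4 hS4 hS4 (hX4 a)).congr
      (ae_of_all _ fun ω => by ring)

lemma integral_sq_mul_sum_le (hX : ∀ k, Measurable (X k)) (hX4 : ∀ k, MemLp (X k) 4 μ)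
    (hmds : ∀ k, μ[X k | pastSigma X k] =ᵐ[μ] 0) (hΦ : ∀ k, ∫ ω, X k ω ^ 4 ∂μ ≤ Φ)
    (c : ℕ → ℝ) (s : Finset ℕ) (k : ℕ) :
    ∫ ω, (X k ω * ∑ i ∈ s, c i * X i ω) ^ 2 ∂μ ≤ 4 * Φ * ∑ i ∈ s, c i ^ 2 := by
  have hΦ0 : 0 ≤ Φ := (integral_nonneg fun ω => by positivity).trans (hΦ k)
  refine abs_le_of_sq_le_sq' ?_ (by positivity) |>.2
  calc _ ≤ (∫ ω, X k ω ^ 4 ∂μ) * ∫ ω, (∑ i ∈ s, c i * X i ω) ^ 4 ∂μ :=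
        sq_integral_mul_sq_le (hX4 k) (memLp_finsetSum s fun i _ => (hX4 i).const_mul (c i))
    _ ≤ Φ * (16 * Φ * (∑ i ∈ s, c i ^ 2) ^ 2) :=
        mul_le_mul (hΦ k) (integral_sum_mul_pow_four_le hX hX4 hmds hΦ c s)
          (integral_nonneg fun ω => by positivity) hΦ0
    _ = (4 * Φ * ∑ i ∈ s, c i ^ 2) ^ 2 := by ring

theorem integral_sq_quadForm_le (hX : ∀ k, Measurable (X k)) (hX4 : ∀ k, MemLp (X k) 4 μ)
    (hmds : ∀ k, μ[X k | pastSigma X k] =ᵐ[μ] 0) (hΦ : ∀ k, ∫ ω, X k ω ^ 4 ∂μ ≤ Φ)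
    (a : ℕ → ℕ → ℝ) (ha : ∀ i, a i i = 0) (p : ℕ) :
    ∫ ω, (∑ i ∈ range p, ∑ j ∈ range p, a i j * X i ω * X j ω) ^ 2 ∂μ
      ≤ 8 * Φ * ∑ i ∈ range p, ∑ j ∈ range p, a i j ^ 2 := by
  have hΦ0 : 0 ≤ Φ := (integral_nonneg fun ω => by positivity).trans (hΦ 0)
  set Y : ℕ → Ω → ℝ := fun k ω => ∑ i ∈ range k, (a i k + a k i) * X i ω
  have hY4 (k : ℕ) : MemLp (Y k) 4 μ := memLp_finsetSum _ fun i _ => (hX4 i).const_mul _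
  have hY (k : ℕ) {n : ℕ} (hkn : k ≤ n) : Measurable[pastSigma X n] (Y k) :=
    measurable_pastSigma_sum _ fun i hi => (mem_range.1 hi).trans_le hkn
  have horth (j k : ℕ) (hjk : j < k) : ∫ ω, X j ω * Y j ω * (X k ω * Y k ω) ∂μ = 0 := by
    have h := integral_mul_eq_zero_of_pastSigma (f := fun ω => X j ω * Y j ω * Y k ω) hX hmds
      ((hX4 k).integrable (by norm_num))
      (((measurable_pastSigma hjk).mul (hY j hjk.le)).mul (hY k le_rfl))
      ((integrable_mul_mul_of_memLp_four (hX4 j) (hY4 j) (hY4 k) (hX4 k)).congr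
        (ae_of_all _ fun ω => by ring))
    rw [← h]
    congr with ω
    ring
  calc ∫ ω, (∑ i ∈ range p, ∑ j ∈ range p, a i j * X i ω * X j ω) ^ 2 ∂μ
      = ∫ ω, (∑ k ∈ range p, X k ω * Y k ω) ^ 2 ∂μ := by
        simp_rw [sum_range_quadForm_eq a ha]
        rfl
    _ = ∑ k ∈ range p, ∫ ω, (X k ω * Y k ω) ^ 2 ∂μ :=
        integral_sq_sum_eq_of_orthogonal _
          (fun j _ k _ => integrable_mul_mul_of_memLp_four (hX4 j) (hY4 j) (hX4 k) (hY4 k))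
          (fun j _ k _ => horth j k)
    _ ≤ ∑ k ∈ range p, 4 * Φ * ∑ i ∈ range k, (a i k + a k i) ^ 2 :=
        sum_le_sum fun k _ => integral_sq_mul_sum_le hX hX4 hmds hΦ _ _ k
    _ ≤ 8 * Φ * ∑ i ∈ range p, ∑ j ∈ range p, a i j ^ 2 := by
        rw [← mul_sum]
        nlinarith [sum_range_sum_range_add_sq_le a ha p]

end Martingale

section ExtendByZero

variable {R : Type*} [Zero R] {p : ℕ}

def extendByZero (A : Matrix (Fin p) (Fin p) R) (i j : ℕ) : R :=
  if h : i < p ∧ j < p then A ⟨i, h.1⟩ ⟨j, h.2⟩ else 0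

lemma extendByZero_val (A : Matrix (Fin p) (Fin p) R) (i j : Fin p) :
    extendByZero A i j = A i j := by
  simp [extendByZero]

lemma extendByZero_self {A : Matrix (Fin p) (Fin p) R} (hA : ∀ i, A i i = 0) (i : ℕ) :
    extendByZero A i i = 0 := by
  unfold extendByZero
  split_ifs
  exacts [hA _, rfl]

lemma sum_fin_eq_sum_range_extendByZero {M : Type*} [AddCommMonoid M]
    (A : Matrix (Fin p) (Fin p) R) (g : ℕ → ℕ → R → M) :
    ∑ i : Fin p, ∑ j : Fin p, g i j (A i j)
      = ∑ i ∈ range p, ∑ j ∈ range p, g i j (extendByZero A i j) := by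
  simp only [← extendByZero_val A]
  rw [Fin.sum_univ_eq_sum_range (fun i => ∑ j : Fin p, g i j (extendByZero A i j))]
  exact sum_congr rfl fun i _ => Fin.sum_univ_eq_sum_range (fun j => g i j (extendByZero A i j)) p

end ExtendByZero

universe u

/-- For a martingale difference sequence (w.r.t. its natural filtration) with `E[X_k²] ≤ 1` and
fourth moments bounded by `Φ₀`, there is a universal constant `C > 0` such that for any `p × p`
matrix `A` with zero diagonal, `Var(X_pᵀ A X_p) ≤ C Φ₀ tr(A Aᵀ)`. -/
theorem variance_quadratic_form_martingale_differences :
    ∃ C : ℝ, 0 < C ∧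
      ∀ (Ω : Type u) [MeasurableSpace Ω] (μ : Measure Ω) [IsProbabilityMeasure μ]
        (X : ℕ → Ω → ℝ) (Φ₀ : ℝ),
        (∀ k, Measurable (X k)) →
        (∀ k, MemLp (X k) 4 μ) →
        (∀ k, ∫ ω, X k ω ∂μ = 0) →
        (∀ k, ∫ ω, (X k ω) ^ 2 ∂μ ≤ 1) →
        -- martingale difference property w.r.t. the natural filtration:
        -- `E[X_k | X_0, …, X_{k-1}] = 0` a.s. for every `k`
        (∀ k : ℕ,
          μ[X k | MeasurableSpace.comap (fun ω => (fun i : Fin k => X i ω))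
              MeasurableSpace.pi] =ᵐ[μ] 0) →
        (∀ k, ∫ ω, (X k ω) ^ 4 ∂μ ≤ Φ₀) →
        ∀ (p : ℕ) (A : Matrix (Fin p) (Fin p) ℝ), 1 ≤ p →
          (∀ i, A i i = 0) →
          variance' μ (fun ω => ∑ i, ∑ j, A i j * X i ω * X j ω) ≤
            C * Φ₀ * Matrix.trace (A * Aᵀ) := by
  refine ⟨8, by norm_num, fun Ω _ μ _ X Φ₀ hX hX4 _ _ hmds hΦ p A _ hA => ?_⟩
  have hquad (ω : Ω) : ∑ i, ∑ j, A i j * X i ω * X j ω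
      = ∑ i ∈ range p, ∑ j ∈ range p, extendByZero A i j * X i ω * X j ω :=
    sum_fin_eq_sum_range_extendByZero A fun i j a => a * X i ω * X j ω
  have htrace : trace (A * Aᵀ) = ∑ i ∈ range p, ∑ j ∈ range p, extendByZero A i j ^ 2 := by
    rw [← sum_fin_eq_sum_range_extendByZero A fun _ _ a => a ^ 2]
    simp [trace, mul_apply, sq]
  calc variance' μ (fun ω => ∑ i, ∑ j, A i j * X i ω * X j ω)
      ≤ ∫ ω, (∑ i, ∑ j, A i j * X i ω * X j ω) ^ 2 ∂μ := sub_le_self _ (sq_nonneg _)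
    _ ≤ 8 * Φ₀ * trace (A * Aᵀ) := by
        simp_rw [hquad, htrace]
        exact integral_sq_quadForm_le hX hX4 hmds hΦ _ (extendByZero_self hA) p
end
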